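/- arXiv:0911.0234 — 8 statements merged into one kernel-verified Lean document; each statement's English description precedes it below -/
import Mathlib

section
/- Let n ≥ 3, 2 ≤ k ≤ n, and let ξ : ℝ → ℝ be a C² function satisfying the radial σ_k-Yamabe ODE 2(1-ξ'²)^(k-1)·[(k/n)ξ'' + (1/2 - k/n)(1-ξ'²)]·e^(2kξ) = 1 on an interval. Then the quantity h(t) := e^((2k-n)ξ(t))·(1-ξ'(t)²)^k - e^(-nξ(t)) is constant on that interval. -/
/-!
Writing `u = ξ'`, the derivative of `h` factors as
`h' = u e^{-nξ} (n - (1-u²)^{k-1} (2k ξ'' + (n-2k)(1-u²)) e^{2kξ})`,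
using `e^{(2k-n)ξ} = e^{2kξ} e^{-nξ}`. Multiplied by `n`, the ODE says precisely that the
bracket vanishes, so `h' = 0` on the interval and `h` is constant there.
-/

open Real

namespace SigmaKYamabe

noncomputable def firstIntegral (n : ℝ) (k : ℕ) (ξ u : ℝ → ℝ) (t : ℝ) : ℝ :=
  exp ((2 * k - n) * ξ t) * (1 - u t ^ 2) ^ k - exp (-n * ξ t)

theorem hasDerivAt_firstIntegral {n : ℝ} {k : ℕ} (hk : 1 ≤ k) {ξ u : ℝ → ℝ} {v x : ℝ}
    (hξ : HasDerivAt ξ (u x) x) (hu : HasDerivAt u v x) :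
    HasDerivAt (firstIntegral n k ξ u)
      (u x * exp (-n * ξ x) *
        (n - (1 - u x ^ 2) ^ (k - 1) * (2 * k * v + (n - 2 * k) * (1 - u x ^ 2)) *
          exp (2 * k * ξ x))) x := by
  obtain ⟨m, rfl⟩ := Nat.exists_eq_add_of_le' hk
  have hpow : HasDerivAt (fun t => (1 - u t ^ 2) ^ (m + 1))
      ((m + 1 : ℕ) * (1 - u x ^ 2) ^ m * -(2 * u x * v)) x := by
    simpa using ((hu.pow 2).const_sub 1).fun_pow (m + 1)
  have hexp : exp ((2 * (m + 1 : ℕ) - n) * ξ x) =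
      exp (2 * (m + 1 : ℕ) * ξ x) * exp (-n * ξ x) := by
    rw [← exp_add]; ring_nf
  refine (((hξ.const_mul _).exp.mul hpow).sub (hξ.const_mul (-n)).exp).congr_deriv ?_
  rw [hexp, Nat.add_sub_cancel]
  ring

theorem ode_clear_denom {n : ℝ} (hn : n ≠ 0) {k P v w E : ℝ}
    (hode : 2 * P * (k / n * v + (1 / 2 - k / n) * w) * E = 1) :
    P * (2 * k * v + (n - 2 * k) * w) * E = n := by
  field_simp at hode
  linear_combination hode

end SigmaKYamabe

open SigmaKYamabe

theorem first_integral_sigma_k_general (n k : ℕ) (hn : 3 ≤ n) (hk : 2 ≤ k)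
    (ξ : ℝ → ℝ) (hξ : ContDiff ℝ 2 ξ) (a b : ℝ)
    (hode : ∀ t ∈ Set.Ioo a b,
      2 * (1 - (deriv ξ t) ^ 2) ^ (k - 1) *
        ((k : ℝ) / n * deriv (deriv ξ) t + (1 / 2 - (k : ℝ) / n) * (1 - (deriv ξ t) ^ 2)) *
        Real.exp (2 * k * ξ t) = 1) :
    ∀ s ∈ Set.Ioo a b, ∀ t ∈ Set.Ioo a b,
      Real.exp ((2 * (k : ℝ) - n) * ξ s) * (1 - (deriv ξ s) ^ 2) ^ k
          - Real.exp (-(n : ℝ) * ξ s)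
      = Real.exp ((2 * (k : ℝ) - n) * ξ t) * (1 - (deriv ξ t) ^ 2) ^ k
          - Real.exp (-(n : ℝ) * ξ t) := by
  have hn0 : (n : ℝ) ≠ 0 := by norm_cast; omega
  have hderiv : ∀ x ∈ Set.Ioo a b, HasDerivAt (firstIntegral n k ξ (deriv ξ)) 0 x := by
    intro x hx
    have h := hasDerivAt_firstIntegral (n := n) (k := k) (by omega)
      (hξ.differentiable two_ne_zero x).hasDerivAt
      (hξ.differentiable_deriv_two x).hasDerivAt
    rwa [ode_clear_denom hn0 (hode x hx), sub_self, mul_zero] at h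
  intro s hs t ht
  exact isOpen_Ioo.is_const_of_deriv_eq_zero isPreconnected_Ioo
    (fun x hx => (hderiv x hx).differentiableAt.differentiableWithinAt)
    (fun x hx => (hderiv x hx).deriv) hs ht

/-- First integral of the radial σ_k-Yamabe ODE: along a `C²` solution of
`2(1-ξ'²)^(k-1)[(k/n)ξ'' + (1/2 - k/n)(1-ξ'²)]e^(2kξ) = 1` on an interval,
the quantity `h(t) = e^((2k-n)ξ)(1-ξ'²)^k - e^(-nξ)` is constant. -/
theorem first_integral_sigma_k (n k : ℕ) (hn : 3 ≤ n) (hk : 2 ≤ k) (hkn : k ≤ n)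
    (ξ : ℝ → ℝ) (hξ : ContDiff ℝ 2 ξ) (a b : ℝ)
    (hode : ∀ t ∈ Set.Ioo a b,
      2 * (1 - (deriv ξ t) ^ 2) ^ (k - 1) *
        ((k : ℝ) / n * deriv (deriv ξ) t + (1 / 2 - (k : ℝ) / n) * (1 - (deriv ξ t) ^ 2)) *
        Real.exp (2 * k * ξ t) = 1) :
    ∀ s ∈ Set.Ioo a b, ∀ t ∈ Set.Ioo a b,
      Real.exp ((2 * (k : ℝ) - n) * ξ s) * (1 - (deriv ξ s) ^ 2) ^ k
          - Real.exp (-(n : ℝ) * ξ s)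
      = Real.exp ((2 * (k : ℝ) - n) * ξ t) * (1 - (deriv ξ t) ^ 2) ^ k
          - Real.exp (-(n : ℝ) * ξ t) :=
  first_integral_sigma_k_general n k hn hk ξ hξ a b hode
end

section
/- Let n ≥ 3, 2 ≤ k, 2k < n, 0 < h < h* where h* = (2k/(n-2k))·((n-2k)/n)^(n/(2k)). Then the equation H(0,y) = 0, where H(x,y) = h + e^(-ny) - e^((2k-n)y)(1-x²)^k, has exactly two solutions y = ξ₋ < ξ₊, and these are simple roots: the derivative of y ↦ H(0,y) is nonzero at each. -/
/-!
With `A = n > B = n - 2k > 0`, the function `f(y) = h + e^(-Ay) - e^(-By)` has derivative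
`B e^(-By) - A e^(-Ay)`, which changes sign exactly once, at `c = log(A/B)/(A - B)`:
`f` strictly decreases on `(-∞, c]` and strictly increases on `[c, ∞)`. Since `f(0) = h > 0`,
`f(y) → h > 0` as `y → ∞`, and `f(c) = h - h*` with `h* = (A - B)/B · (B/A)^(A/(A-B))`,
the hypothesis `h < h*` gives exactly one zero on each side of `c`, and the derivative
vanishes at neither.
-/

open Real Set Filter Topology

theorem exists_two_zeros_of_strictAntiOn_of_strictMonoOn {f : ℝ → ℝ} {a b c : ℝ}
    (hf : ContinuousOn f (Icc a b)) (hanti : StrictAntiOn f (Iic c))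
    (hmono : StrictMonoOn f (Ici c)) (hac : a < c) (hcb : c < b)
    (ha : 0 < f a) (hc : f c < 0) (hb : 0 < f b) :
    ∃ ξm ξp, ξm < c ∧ c < ξp ∧ f ξm = 0 ∧ f ξp = 0 ∧
      ∀ y, f y = 0 → y = ξm ∨ y = ξp := by
  obtain ⟨ξm, hξm, hfξm⟩ : ∃ ξ ∈ Icc a c, f ξ = 0 :=
    intermediate_value_Icc' hac.le (hf.mono (Icc_subset_Icc_right hcb.le)) ⟨hc.le, ha.le⟩
  obtain ⟨ξp, hξp, hfξp⟩ : ∃ ξ ∈ Icc c b, f ξ = 0 :=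
    intermediate_value_Icc hcb.le (hf.mono (Icc_subset_Icc_left hac.le)) ⟨hc.le, hb.le⟩
  have hne : ∀ {y}, f y = 0 → y ≠ c := fun hy hyc => hc.ne (hyc ▸ hy)
  have hξm_lt : ξm < c := lt_of_le_of_ne hξm.2 (hne hfξm)
  have hlt_ξp : c < ξp := lt_of_le_of_ne' hξp.1 (hne hfξp)
  refine ⟨ξm, ξp, hξm_lt, hlt_ξp, hfξm, hfξp, fun y hy => ?_⟩
  rcases le_total y c with hyc | hcy
  · exact .inl (hanti.injOn hyc hξm_lt.le (hy.trans hfξm.symm))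
  · exact .inr (hmono.injOn hcy hlt_ξp.le (hy.trans hfξp.symm))

/-- `H(0, y)` is `expDiff h n (n - 2k) y`. -/
noncomputable def expDiff (h A B y : ℝ) : ℝ := h + exp (-A * y) - exp (-B * y)

noncomputable def expDiffCrit (A B : ℝ) : ℝ := log (A / B) / (A - B)

theorem hasDerivAt_expDiff (h A B y : ℝ) :
    HasDerivAt (expDiff h A B) (B * exp (-B * y) - A * exp (-A * y)) y := by
  have hexp (c : ℝ) : HasDerivAt (fun y => exp (-c * y)) (exp (-c * y) * -c) y := by
    simpa using ((hasDerivAt_id y).const_mul (-c)).exp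
  exact (((hexp A).const_add h).sub (hexp B)).congr_deriv (by ring)

theorem continuous_expDiff (h A B : ℝ) : Continuous (expDiff h A B) := by
  unfold expDiff; fun_prop

theorem tendsto_expDiff_atTop (h : ℝ) {A B : ℝ} (hA : 0 < A) (hB : 0 < B) :
    Tendsto (expDiff h A B) atTop (𝓝 h) := by
  have hexp {c : ℝ} (hc : 0 < c) : Tendsto (fun y => exp (-c * y)) atTop (𝓝 0) := by
    refine (tendsto_exp_neg_atTop_nhds_zero.comp (tendsto_id.const_mul_atTop hc)).congr fun y => ?_
    simp [neg_mul]
  have := ((hexp hA).const_add h).sub (hexp hB)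
  rwa [add_zero, sub_zero] at this

section

variable {A B : ℝ} (hB : 0 < B) (hBA : B < A)
include hB hBA

theorem expDiffCrit_pos : 0 < expDiffCrit A B :=
  div_pos (log_pos ((one_lt_div hB).2 hBA)) (sub_pos.2 hBA)

theorem deriv_expDiff (h y : ℝ) :
    deriv (expDiff h A B) y = A * exp (-A * y) * (exp ((A - B) * (y - expDiffCrit A B)) - 1) := by
  have hA : 0 < A := hB.trans hBA
  have hAB : A - B ≠ 0 := sub_ne_zero.2 hBA.ne'
  have hratio : exp ((A - B) * (y - expDiffCrit A B)) = exp ((A - B) * y) * (B / A) := by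
    rw [mul_sub, expDiffCrit, mul_div_cancel₀ _ hAB, exp_sub, exp_log (div_pos hA hB)]
    field_simp
  have hsplit : exp (-B * y) = exp (-A * y) * exp ((A - B) * y) := by rw [← exp_add]; ring_nf
  rw [(hasDerivAt_expDiff h A B y).deriv, hratio, hsplit]
  field_simp

theorem deriv_expDiff_neg (h : ℝ) {y : ℝ} (hy : y < expDiffCrit A B) :
    deriv (expDiff h A B) y < 0 := by
  rw [deriv_expDiff hB hBA]
  refine mul_neg_of_pos_of_neg (mul_pos (hB.trans hBA) (exp_pos _))
    (sub_neg.2 (exp_lt_one_iff.2 ?_))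
  exact mul_neg_of_pos_of_neg (sub_pos.2 hBA) (sub_neg.2 hy)

theorem deriv_expDiff_pos (h : ℝ) {y : ℝ} (hy : expDiffCrit A B < y) :
    0 < deriv (expDiff h A B) y := by
  rw [deriv_expDiff hB hBA]
  refine mul_pos (mul_pos (hB.trans hBA) (exp_pos _)) (sub_pos.2 (one_lt_exp_iff.2 ?_))
  exact mul_pos (sub_pos.2 hBA) (sub_pos.2 hy)

theorem strictAntiOn_expDiff (h : ℝ) : StrictAntiOn (expDiff h A B) (Iic (expDiffCrit A B)) :=
  strictAntiOn_of_deriv_neg (convex_Iic _) (continuous_expDiff h A B).continuousOn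
    fun _ hy => deriv_expDiff_neg hB hBA h (by simpa using hy)

theorem strictMonoOn_expDiff (h : ℝ) : StrictMonoOn (expDiff h A B) (Ici (expDiffCrit A B)) :=
  strictMonoOn_of_deriv_pos (convex_Ici _) (continuous_expDiff h A B).continuousOn
    fun _ hy => deriv_expDiff_pos hB hBA h (by simpa using hy)

theorem exp_neg_mul_expDiffCrit (c : ℝ) :
    exp (-c * expDiffCrit A B) = (B / A) ^ (c / (A - B)) := by
  have hA : 0 < A := hB.trans hBA
  rw [rpow_def_of_pos (div_pos hB hA), expDiffCrit, ← inv_div A B, log_inv]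
  ring_nf

theorem expDiff_expDiffCrit (h : ℝ) :
    expDiff h A B (expDiffCrit A B) = h - (A - B) / B * (B / A) ^ (A / (A - B)) := by
  have hA : 0 < A := hB.trans hBA
  have hAB : A - B ≠ 0 := sub_ne_zero.2 hBA.ne'
  have hexpo : B / (A - B) = A / (A - B) - 1 := by field_simp; ring
  rw [expDiff, exp_neg_mul_expDiffCrit hB hBA, exp_neg_mul_expDiffCrit hB hBA, hexpo,
    rpow_sub_one (div_pos hB hA).ne']
  field_simp
  ring

theorem exists_two_simple_zeros_expDiff {h : ℝ} (hh : 0 < h)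
    (hh' : h < (A - B) / B * (B / A) ^ (A / (A - B))) :
    ∃ ξm ξp, ξm < ξp ∧ expDiff h A B ξm = 0 ∧ expDiff h A B ξp = 0 ∧
      (∀ y, expDiff h A B y = 0 → y = ξm ∨ y = ξp) ∧
      deriv (expDiff h A B) ξm ≠ 0 ∧ deriv (expDiff h A B) ξp ≠ 0 := by
  set c := expDiffCrit A B
  have hc : expDiff h A B c < 0 := by rw [expDiff_expDiffCrit hB hBA]; linarith
  have h0 : 0 < expDiff h A B 0 := by simpa [expDiff] using hh
  obtain ⟨b, hb, hcb⟩ : ∃ b, 0 < expDiff h A B b ∧ c < b :=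
    (((tendsto_expDiff_atTop h (hB.trans hBA) hB).eventually (lt_mem_nhds hh)).and
      (eventually_gt_atTop c)).exists
  obtain ⟨ξm, ξp, hξm, hξp, hfξm, hfξp, honly⟩ :=
    exists_two_zeros_of_strictAntiOn_of_strictMonoOn (continuous_expDiff h A B).continuousOn
      (strictAntiOn_expDiff hB hBA h) (strictMonoOn_expDiff hB hBA h) (expDiffCrit_pos hB hBA)
      hcb h0 hc hb
  exact ⟨ξm, ξp, hξm.trans hξp, hfξm, hfξp, honly,
    (deriv_expDiff_neg hB hBA h hξm).ne, (deriv_expDiff_pos hB hBA h hξp).ne'⟩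

end

theorem two_simple_roots_of_H_general (n k : ℕ) (hkn : 2 * k < n)
    (h : ℝ) (hh0 : 0 < h)
    (hh1 : h < 2 * (k : ℝ) / ((n : ℝ) - 2 * k)
        * (((n : ℝ) - 2 * k) / n) ^ ((n : ℝ) / (2 * k))) :
    ∃ ξm ξp : ℝ, ξm < ξp ∧
      h + Real.exp (-(n : ℝ) * ξm) - Real.exp ((2 * (k : ℝ) - n) * ξm) = 0 ∧
      h + Real.exp (-(n : ℝ) * ξp) - Real.exp ((2 * (k : ℝ) - n) * ξp) = 0 ∧
      (∀ y : ℝ, h + Real.exp (-(n : ℝ) * y) - Real.exp ((2 * (k : ℝ) - n) * y) = 0 →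
        y = ξm ∨ y = ξp) ∧
      deriv (fun y => h + Real.exp (-(n : ℝ) * y) - Real.exp ((2 * (k : ℝ) - n) * y)) ξm ≠ 0 ∧
      deriv (fun y => h + Real.exp (-(n : ℝ) * y) - Real.exp ((2 * (k : ℝ) - n) * y)) ξp ≠ 0 := by
  -- for `k = 0` the bound `h*` is `0`
  have hk : 0 < k := Nat.pos_of_ne_zero fun hk0 => by simp [hk0] at hh1; linarith
  have hB : (0 : ℝ) < n - 2 * k := by rw [sub_pos]; exact_mod_cast hkn
  have hBA : (n : ℝ) - 2 * k < n := by linarith [show (0 : ℝ) < k by exact_mod_cast hk]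
  have hH : expDiff h n (n - 2 * k) =
      fun y => h + exp (-(n : ℝ) * y) - exp ((2 * (k : ℝ) - n) * y) :=
    funext fun y => by rw [expDiff, neg_sub]
  simpa only [hH] using
    exists_two_simple_zeros_expDiff hB hBA hh0 (by rwa [sub_sub_cancel])

/-- For `2k < n` and `0 < h < h*`, the equation `H(0,y) = 0`, where
`H(x,y) = h + e^(-ny) - e^((2k-n)y)(1-x²)^k`, has exactly two solutions
`ξ₋ < ξ₊`, both simple roots of `y ↦ H(0,y)`. -/
theorem two_simple_roots_of_H (n k : ℕ) (hn : 3 ≤ n) (hk : 2 ≤ k) (hkn : 2 * k < n)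
    (h : ℝ) (hh0 : 0 < h)
    (hh1 : h < 2 * (k : ℝ) / ((n : ℝ) - 2 * k)
        * (((n : ℝ) - 2 * k) / n) ^ ((n : ℝ) / (2 * k))) :
    ∃ ξm ξp : ℝ, ξm < ξp ∧
      h + Real.exp (-(n : ℝ) * ξm) - Real.exp ((2 * (k : ℝ) - n) * ξm) = 0 ∧
      h + Real.exp (-(n : ℝ) * ξp) - Real.exp ((2 * (k : ℝ) - n) * ξp) = 0 ∧
      (∀ y : ℝ, h + Real.exp (-(n : ℝ) * y) - Real.exp ((2 * (k : ℝ) - n) * y) = 0 →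
        y = ξm ∨ y = ξp) ∧
      deriv (fun y => h + Real.exp (-(n : ℝ) * y) - Real.exp ((2 * (k : ℝ) - n) * y)) ξm ≠ 0 ∧
      deriv (fun y => h + Real.exp (-(n : ℝ) * y) - Real.exp ((2 * (k : ℝ) - n) * y)) ξp ≠ 0 :=
  two_simple_roots_of_H_general n k hkn h hh0 hh1
end

section
/- Let f : ℝ² → ℝ be locally Lipschitz, and suppose β : [0,∞) → ℝ is C² with |β| + |β'| bounded and β'' = f(β', β) + e₁(t) where e₁(t) → 0 as t → ∞. Suppose ψ is a constant solution ψ ≡ m of ψ'' = f(ψ', ψ), that β(tᵢ + ·) - m → 0 in C¹_loc for some sequence tᵢ → ∞, and that there is a continuous H with H(x,y) ≥ A(|x|^l + |y-m|^l) for |x| + |y-m| ≤ ε₁ (some A, l, ε₁ > 0), and |H(β'(t), β(t))| ≤ e₂(t) with e₂ monotone non-increasing to 0. Then |β'(t)|^l + |β(t) - m|^l ≤ A⁻¹ e₂(t) for all sufficiently large t. -/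
/-- Constant-limit case of the ODE asymptotics theorem: a bounded solution of the
perturbed ODE `β'' = f(β', β) + e₁` which converges in `C¹_loc` along a sequence of
translations to a constant equilibrium `m`, and which admits an approximate first
integral `H` nondegenerate near `(0,m)`, satisfies
`|β'(t)|^l + |β(t)-m|^l ≤ A⁻¹ e₂(t)` for all large `t`. -/
theorem ode_asymptotics_constant_case (f : ℝ × ℝ → ℝ) (hf : LocallyLipschitz f)
    (β : ℝ → ℝ) (hβ : ContDiff ℝ 2 β)
    (M : ℝ) (hM : ∀ t ≥ (0 : ℝ), |β t| + |deriv β t| ≤ M)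
    (e₁ : ℝ → ℝ)
    (hode : ∀ t ≥ (0 : ℝ), deriv (deriv β) t = f (deriv β t, β t) + e₁ t)
    (he₁ : Filter.Tendsto e₁ Filter.atTop (nhds 0))
    (m : ℝ) (hm : f (0, m) = 0)
    (ts : ℕ → ℝ) (hts : Filter.Tendsto ts Filter.atTop Filter.atTop)
    (hconv : ∀ K : Set ℝ, IsCompact K →
      TendstoUniformlyOn (fun i τ => β (ts i + τ)) (fun _ => m) Filter.atTop K ∧
      TendstoUniformlyOn (fun i τ => deriv β (ts i + τ)) (fun _ => 0) Filter.atTop K)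
    (H : ℝ × ℝ → ℝ) (hH : Continuous H)
    (A l ε₁ : ℝ) (hA : 0 < A) (hl : 0 < l) (hε₁ : 0 < ε₁)
    (hHlow : ∀ x y : ℝ, |x| + |y - m| ≤ ε₁ → A * (|x| ^ l + |y - m| ^ l) ≤ H (x, y))
    (e₂ : ℝ → ℝ) (hHe₂ : ∀ t ≥ (0 : ℝ), |H (deriv β t, β t)| ≤ e₂ t)
    (he₂mono : Antitone e₂) (he₂ : Filter.Tendsto e₂ Filter.atTop (nhds 0)) :
    ∃ T : ℝ, ∀ t ≥ T, |deriv β t| ^ l + |β t - m| ^ l ≤ A⁻¹ * e₂ t := by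
  have hβc : Continuous β := hβ.continuous
  have hβ'c : Continuous (deriv β) := hβ.continuous_deriv one_le_two
  set g : ℝ → ℝ := fun t => |deriv β t| + |β t - m| with hgdef
  have hgc : Continuous g := (hβ'c.abs).add ((hβc.sub continuous_const).abs)
  set c : ℝ := A * (ε₁ / 4) ^ l with hcdef
  have hc0 : 0 < c := mul_pos hA (Real.rpow_pos_of_pos (by linarith) l)
  -- if g s = ε₁/2 and s ≥ 0 then c ≤ e₂ s
  have key : ∀ s : ℝ, 0 ≤ s → g s = ε₁ / 2 → c ≤ e₂ s := by
    intro s hs hgs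
    have h1 : |deriv β s| + |β s - m| ≤ ε₁ := by
      have := hgs; simp only [hgdef] at this; linarith
    have hlow := hHlow (deriv β s) (β s) h1
    have hsum : (ε₁ / 4) ^ l ≤ |deriv β s| ^ l + |β s - m| ^ l := by
      have hgs' : |deriv β s| + |β s - m| = ε₁ / 2 := hgs
      rcases le_or_gt (ε₁ / 4) (|deriv β s|) with h | h
      · have h2 : (ε₁ / 4) ^ l ≤ |deriv β s| ^ l :=
          Real.rpow_le_rpow (by linarith) h hl.le
        have h3 : (0:ℝ) ≤ |β s - m| ^ l := Real.rpow_nonneg (abs_nonneg _) l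
        linarith
      · have h4 : (ε₁ / 4) ≤ |β s - m| := by linarith
        have h2 : (ε₁ / 4) ^ l ≤ |β s - m| ^ l :=
          Real.rpow_le_rpow (by linarith) h4 hl.le
        have h3 : (0:ℝ) ≤ |deriv β s| ^ l := Real.rpow_nonneg (abs_nonneg _) l
        linarith
    have h5 : c ≤ A * (|deriv β s| ^ l + |β s - m| ^ l) :=
      mul_le_mul_of_nonneg_left hsum hA.le
    have h6 : H (deriv β s, β s) ≤ |H (deriv β s, β s)| := le_abs_self _
    have h7 := hHe₂ s hs
    linarith
  -- find T₀ with e₂ T₀ < c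
  obtain ⟨T₀, hT₀⟩ := (he₂.eventually (Iio_mem_nhds hc0)).exists
  -- find i with ts i large and g (ts i) < ε₁/2
  obtain ⟨h1, h2⟩ := hconv {0} isCompact_singleton
  have hb : Filter.Tendsto (fun i => β (ts i + 0)) Filter.atTop (nhds m) :=
    h1.tendsto_at rfl
  have hb' : Filter.Tendsto (fun i => deriv β (ts i + 0)) Filter.atTop (nhds 0) :=
    h2.tendsto_at rfl
  have hbe : ∀ᶠ i in Filter.atTop, |β (ts i + 0) - m| < ε₁ / 4 := by
    have := hb.sub_const m
    rw [sub_self] at this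
    have := this.abs
    rw [abs_zero] at this
    exact this.eventually (Iio_mem_nhds (by linarith))
  have hbe' : ∀ᶠ i in Filter.atTop, |deriv β (ts i + 0)| < ε₁ / 4 := by
    have := hb'.abs
    rw [abs_zero] at this
    exact this.eventually (Iio_mem_nhds (by linarith))
  have hlarge : ∀ᶠ i in Filter.atTop, ts i ≥ max T₀ 0 :=
    hts.eventually_ge_atTop (max T₀ 0)
  obtain ⟨i, hi1, hi2, hi3⟩ := (hbe.and (hbe'.and hlarge)).exists
  have hts0 : (0:ℝ) ≤ ts i := le_trans (le_max_right _ _) hi3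
  have htsT₀ : T₀ ≤ ts i := le_trans (le_max_left _ _) hi3
  have hgstart : g (ts i) < ε₁ / 2 := by
    simp only [add_zero] at hi1 hi2
    simp only [hgdef]
    linarith
  -- claim: g t < ε₁/2 for all t ≥ ts i
  have hsmall : ∀ t ≥ ts i, g t < ε₁ / 2 := by
    intro t ht
    by_contra hcon
    push_neg at hcon
    have hmem : ε₁ / 2 ∈ Set.Icc (g (ts i)) (g t) := ⟨hgstart.le, hcon⟩
    obtain ⟨s, hsmem, hseq⟩ := intermediate_value_Icc ht hgc.continuousOn hmem
    have hs0 : 0 ≤ s := le_trans hts0 hsmem.1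
    have := key s hs0 hseq
    have h8 : e₂ s ≤ e₂ T₀ := he₂mono (le_trans htsT₀ hsmem.1)
    linarith [hT₀]
  refine ⟨ts i, fun t ht => ?_⟩
  have hgt := hsmall t ht
  have hbnd : |deriv β t| + |β t - m| ≤ ε₁ := by
    simp only [hgdef] at hgt; linarith
  have hlow := hHlow (deriv β t) (β t) hbnd
  have h6 : H (deriv β t, β t) ≤ |H (deriv β t, β t)| := le_abs_self _
  have h7 := hHe₂ t (le_trans hts0 ht)
  have h9 : A * (|deriv β t| ^ l + |β t - m| ^ l) ≤ e₂ t := by linarith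
  calc |deriv β t| ^ l + |β t - m| ^ l
      = A⁻¹ * (A * (|deriv β t| ^ l + |β t - m| ^ l)) := by
        field_simp
    _ ≤ A⁻¹ * e₂ t := mul_le_mul_of_nonneg_left h9 (inv_nonneg.mpr hA.le)
end

section
/- Let n ≥ 3, 2 ≤ k ≤ n, h ≥ 0, and let ξ : ℝ → ℝ be a C² solution of the radial σ_k-Yamabe ODE ξ'' = (n/(2k))·e^(-2kξ)(1-ξ'²)^(1-k) - ((n-2k)/(2k))(1-ξ'²), with 0 < 1-ξ'² ≤ 1 and first integral e^((2k-n)ξ)(1-ξ'²)^k = e^(-nξ) + h. Define A(t) = (1-ξ'²)/2 and C(t) = ((k-1)/(n-1))ξ'' + ((n-2k+1)/(n-1))·(1-ξ'²)/2. Then C(t)/A(t) = (n(k-1)/(k(n-1)))·e^(-nξ)/(e^(-nξ)+h) + (n-k)/(k(n-1)). -/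
/-- For a solution of the radial σ_k-Yamabe ODE with first integral
`e^((2k-n)ξ)(1-ξ'²)^k = e^(-nξ) + h`, the ratio `C(t)/A(t)` of the linearized
operator's coefficients equals
`(n(k-1)/(k(n-1)))·e^(-nξ)/(e^(-nξ)+h) + (n-k)/(k(n-1))`. -/
theorem ratio_C_over_A (n k : ℕ) (hn : 3 ≤ n) (hk : 2 ≤ k) (hkn : k ≤ n)
    (h : ℝ) (hh : 0 ≤ h) (ξ : ℝ → ℝ) (hξ : ContDiff ℝ 2 ξ)
    (hode : ∀ t, deriv (deriv ξ) t
      = (n : ℝ) / (2 * k) * Real.exp (-2 * k * ξ t)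
          * (1 - (deriv ξ t) ^ 2) ^ ((1 : ℝ) - k)
        - ((n : ℝ) - 2 * k) / (2 * k) * (1 - (deriv ξ t) ^ 2))
    (hpos : ∀ t, 0 < 1 - (deriv ξ t) ^ 2) (hle : ∀ t, 1 - (deriv ξ t) ^ 2 ≤ 1)
    (hfi : ∀ t, Real.exp ((2 * (k : ℝ) - n) * ξ t) * (1 - (deriv ξ t) ^ 2) ^ k
      = Real.exp (-(n : ℝ) * ξ t) + h) :
    ∀ t, (((k : ℝ) - 1) / ((n : ℝ) - 1) * deriv (deriv ξ) t
        + ((n : ℝ) - 2 * k + 1) / ((n : ℝ) - 1) * (1 - (deriv ξ t) ^ 2) / 2)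
        / ((1 - (deriv ξ t) ^ 2) / 2)
      = (n : ℝ) * ((k : ℝ) - 1) / ((k : ℝ) * ((n : ℝ) - 1))
          * Real.exp (-(n : ℝ) * ξ t) / (Real.exp (-(n : ℝ) * ξ t) + h)
        + ((n : ℝ) - k) / ((k : ℝ) * ((n : ℝ) - 1)) := by
  intro t
  have hu : 0 < 1 - (deriv ξ t) ^ 2 := hpos t
  set u := 1 - (deriv ξ t) ^ 2 with hudef
  have he : (0:ℝ) < Real.exp (-(n:ℝ) * ξ t) := Real.exp_pos _
  have heh : (0:ℝ) < Real.exp (-(n:ℝ) * ξ t) + h := by linarith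
  have hk0 : (0:ℝ) < (k:ℝ) := by exact_mod_cast Nat.lt_of_lt_of_le (by norm_num) hk
  have hn1 : (0:ℝ) < (n:ℝ) - 1 := by
    have : (3:ℝ) ≤ (n:ℝ) := by exact_mod_cast hn
    linarith
  have huk : (0:ℝ) < u ^ k := pow_pos hu k
  have hup : u ^ ((1:ℝ) - (k:ℕ)) = u / u ^ (k:ℕ) := by
    rw [Real.rpow_sub hu, Real.rpow_one, Real.rpow_natCast]
  have hfik := hfi t
  have hexp : Real.exp (-2 * (k:ℝ) * ξ t) * Real.exp ((2 * (k:ℝ) - n) * ξ t)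
      = Real.exp (-(n:ℝ) * ξ t) := by
    rw [← Real.exp_add]; ring_nf
  have hE2 : Real.exp (-2 * (k:ℝ) * ξ t)
      = Real.exp (-(n:ℝ) * ξ t) * u ^ k / (Real.exp (-(n:ℝ) * ξ t) + h) := by
    rw [eq_div_iff heh.ne']
    linear_combination (-Real.exp (-2 * (k:ℝ) * ξ t)) * hfik + u ^ k * hexp
  rw [hode t, hup, hE2]
  field_simp
  ring
end

section
/- Let n > k ≥ 2, h ≥ 0, and let ξ satisfy 0 < 1-ξ'(t)² ≤ 1, ξ(t) ≥ 0, and the first integral e^((2k-n)ξ)(1-ξ'²)^k = e^(-nξ) + h. Then for any λ ≥ 2n, -λ·[(n(k-1)/(k(n-1)))·e^(-2kξ)/(1-ξ'²)^k + (n-k)/(k(n-1))] + n·e^(-2kξ)/(1-ξ'²)^(k-1) ≤ -2n(n-k)/(k(n-1)) < 0. -/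
/-!
With `p = 1 - ξ'²` and `a = e^{-2kξ} / p^k`, the coefficient reads `-λ (c₁ a + c₂) + n a p`, where
`c₁ = n(k-1)/(k(n-1))` and `c₂ = (n-k)/(k(n-1))`. Since `c₁ a + c₂ > 0`, it is largest at `λ = 2n`,
and `p ≤ 1` bounds `n a p` by `n a`. What remains is `n a (1 - 2c₁) ≤ 0`, i.e. `2c₁ ≥ 1`, which
amounts to `n(k-2) + k ≥ 0`.
-/

namespace SigmaKYamabe

variable {n k : ℝ}

lemma mul_sub_one_le_two_mul_mul_sub_one (hk : 2 ≤ k) (hn : 0 ≤ n) :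
    k * (n - 1) ≤ 2 * (n * (k - 1)) := by
  nlinarith

lemma one_le_two_mul_div (hk : 2 ≤ k) (hkn : k < n) :
    1 ≤ 2 * (n * (k - 1) / (k * (n - 1))) := by
  have hden : 0 < k * (n - 1) := by nlinarith
  rw [mul_div_assoc', one_le_div hden]
  exact mul_sub_one_le_two_mul_mul_sub_one hk (by linarith)

lemma two_mul_mul_sub_div_pos (hk : 2 ≤ k) (hkn : k < n) :
    0 < 2 * n * (n - k) / (k * (n - 1)) :=
  div_pos (by nlinarith) (by nlinarith)

lemma neg_mul_add_mul_le (hk : 2 ≤ k) (hkn : k < n) {a p lam : ℝ} (ha : 0 ≤ a) (hp : p ≤ 1)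
    (hlam : 2 * n ≤ lam) :
    -lam * (n * (k - 1) / (k * (n - 1)) * a + (n - k) / (k * (n - 1))) + n * (a * p)
      ≤ -(2 * n * (n - k) / (k * (n - 1))) := by
  have hden : 0 < k * (n - 1) := by nlinarith
  have hc₁ : 1 ≤ 2 * (n * (k - 1) / (k * (n - 1))) := one_le_two_mul_div hk hkn
  have hc₂ : 0 < (n - k) / (k * (n - 1)) := div_pos (by linarith) hden
  set c₁ := n * (k - 1) / (k * (n - 1))
  set c₂ := (n - k) / (k * (n - 1))
  have hq : 0 ≤ c₁ * a + c₂ := by nlinarith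
  have hn : 0 ≤ n := by linarith
  calc -lam * (c₁ * a + c₂) + n * (a * p)
      ≤ -(2 * n) * (c₁ * a + c₂) + n * (a * 1) := by
        gcongr
    _ = -(2 * n * c₂) + n * a * (1 - 2 * c₁) := by ring
    _ ≤ -(2 * n * c₂) := by nlinarith [mul_nonneg hn ha]
    _ = -(2 * n * (n - k) / (k * (n - 1))) := by rw [mul_div_assoc]

lemma div_pow_sub_one {K : Type*} [Field K] {p : K} (hp : p ≠ 0) {m : ℕ} (hm : 1 ≤ m) (x : K) :
    x / p ^ (m - 1) = x / p ^ m * p := by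
  rw [pow_sub₀ p hp hm, pow_one]
  field_simp

end SigmaKYamabe

open SigmaKYamabe in
theorem zeroth_order_coefficient_bound_general (n k : ℕ) (hk : 2 ≤ k) (hkn : k < n)
    (ξ : ℝ → ℝ)
    (hpos : ∀ t, 0 < 1 - (deriv ξ t) ^ 2) (hle : ∀ t, 1 - (deriv ξ t) ^ 2 ≤ 1) :
    ∀ t, ∀ lam : ℝ, 2 * (n : ℝ) ≤ lam →
      -lam * ((n : ℝ) * ((k : ℝ) - 1) / ((k : ℝ) * ((n : ℝ) - 1))
            * Real.exp (-2 * k * ξ t) / (1 - (deriv ξ t) ^ 2) ^ k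
          + ((n : ℝ) - k) / ((k : ℝ) * ((n : ℝ) - 1)))
        + (n : ℝ) * Real.exp (-2 * k * ξ t) / (1 - (deriv ξ t) ^ 2) ^ (k - 1)
      ≤ -(2 * (n : ℝ) * ((n : ℝ) - k) / ((k : ℝ) * ((n : ℝ) - 1))) ∧
      -(2 * (n : ℝ) * ((n : ℝ) - k) / ((k : ℝ) * ((n : ℝ) - 1))) < 0 := by
  intro t lam hlam
  have hkR : (2 : ℝ) ≤ k := by exact_mod_cast hk
  have hknR : (k : ℝ) < n := by exact_mod_cast hkn
  have ha : 0 ≤ Real.exp (-2 * k * ξ t) / (1 - deriv ξ t ^ 2) ^ k :=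
    div_nonneg (Real.exp_pos _).le (pow_pos (hpos t) k).le
  rw [div_pow_sub_one (hpos t).ne' (by omega)]
  exact ⟨(neg_mul_add_mul_le hkR hknR ha (hle t) hlam).trans_eq' (by ring),
    neg_neg_of_pos (two_mul_mul_sub_div_pos hkR hknR)⟩

/-- Negative upper bound for the zeroth-order coefficient of the linearized
σ_k-Yamabe operator when the spherical eigenvalue `λ ≥ 2n`. -/
theorem zeroth_order_coefficient_bound (n k : ℕ) (hk : 2 ≤ k) (hkn : k < n)
    (h : ℝ) (hh : 0 ≤ h) (ξ : ℝ → ℝ)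
    (hpos : ∀ t, 0 < 1 - (deriv ξ t) ^ 2) (hle : ∀ t, 1 - (deriv ξ t) ^ 2 ≤ 1)
    (hxi : ∀ t, 0 ≤ ξ t)
    (hfi : ∀ t, Real.exp ((2 * (k : ℝ) - n) * ξ t) * (1 - (deriv ξ t) ^ 2) ^ k
      = Real.exp (-(n : ℝ) * ξ t) + h) :
    ∀ t, ∀ lam : ℝ, 2 * (n : ℝ) ≤ lam →
      -lam * ((n : ℝ) * ((k : ℝ) - 1) / ((k : ℝ) * ((n : ℝ) - 1))
            * Real.exp (-2 * k * ξ t) / (1 - (deriv ξ t) ^ 2) ^ k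
          + ((n : ℝ) - k) / ((k : ℝ) * ((n : ℝ) - 1)))
        + (n : ℝ) * Real.exp (-2 * k * ξ t) / (1 - (deriv ξ t) ^ 2) ^ (k - 1)
      ≤ -(2 * (n : ℝ) * ((n : ℝ) - k) / ((k : ℝ) * ((n : ℝ) - 1))) ∧
      -(2 * (n : ℝ) * ((n : ℝ) - k) / ((k : ℝ) * ((n : ℝ) - 1))) < 0 :=
  zeroth_order_coefficient_bound_general n k hk hkn ξ hpos hle
end

section
/- Let n ≥ 3, 2 ≤ k ≤ n, h > 0, and ξ = ξ_h a periodic solution of the radial σ_k-Yamabe ODE with first integral e^((2k-n)ξ)(1-ξ'²)^k = e^(-nξ) + h. Then the functions φ⁺(t) = e^t(1 - ξ'(t)) and φ⁻(t) = e^(-t)(1 + ξ'(t)) are solutions of the linearized ODE φ'' + (B/A)φ' + [-(n-1)C/A + (n e^(-nξ)/(e^(-nξ)+h))(1-ξ'²)]φ = 0, where A = (1-ξ'²)/2, B = -ξ'[(k-1)ξ'' + ((n-2k)/2)(1-ξ'²)], C = ((k-1)/(n-1))ξ'' + ((n-2k+1)/(n-1))(1-ξ'²)/2. -/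
/-!
At each time, the first integral turns the potential `n e^(-nξ)/(e^(-nξ)+h) (1-ξ'²)` into
`n e^(-2kξ) (1-ξ'²)^(1-k) = 2kξ'' + (n-2k)(1-ξ'²)`, and differentiating the ODE expresses `ξ'''`
rationally in `ξ'` and `ξ''`. After these substitutions the linearized operator applied to
`e^(εt)(1-εξ')` is a rational function of `ξ'`, `ξ''` that vanishes identically when `ε² = 1`.
-/

open Real

lemma mul_mul_eq_of_eq_div_mul_mul_sub {n k v E R P : ℝ} (hk : k ≠ 0)
    (h : v = n / (2 * k) * E * R - (n - 2 * k) / (2 * k) * P) :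
    n * E * R = 2 * k * v + (n - 2 * k) * P := by
  rw [h]; field_simp; ring

lemma mul_exp_div_add_mul_eq {n x p h : ℝ} {k : ℕ} (hp : 0 < p)
    (hfi : exp ((2 * k - n) * x) * p ^ k = exp (-n * x) + h) :
    n * exp (-n * x) / (exp (-n * x) + h) * p = n * exp (-2 * k * x) * p ^ ((1 : ℝ) - k) := by
  have hexp : exp (-n * x) = exp ((2 * k - n) * x) * exp (-2 * k * x) := by
    rw [← exp_add]; ring_nf
  have hrpow : p ^ ((1 : ℝ) - k) = p / p ^ k := by
    rw [rpow_sub hp, rpow_one, rpow_natCast]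
  rw [← hfi, hrpow, hexp]
  field_simp

lemma hasDerivAt_deriv_deriv_of_ode {n k : ℝ} {ξ : ℝ → ℝ} (hk : k ≠ 0)
    (hξ : Differentiable ℝ ξ) (hξ' : Differentiable ℝ (deriv ξ))
    (hode : ∀ t, deriv (deriv ξ) t
      = n / (2 * k) * exp (-2 * k * ξ t) * (1 - deriv ξ t ^ 2) ^ (1 - k)
        - (n - 2 * k) / (2 * k) * (1 - deriv ξ t ^ 2))
    {t : ℝ} (hpos : 0 < 1 - deriv ξ t ^ 2) :
    HasDerivAt (deriv (deriv ξ))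
      (deriv ξ t * ((2 * k * deriv (deriv ξ) t + (n - 2 * k) * (1 - deriv ξ t ^ 2))
          * ((k - 1) * deriv (deriv ξ) t / (1 - deriv ξ t ^ 2) - k)
        + (n - 2 * k) * deriv (deriv ξ) t) / k) t := by
  have hP : HasDerivAt (fun s => 1 - deriv ξ s ^ 2)
      (-(2 * deriv ξ t * deriv (deriv ξ) t)) t :=
    (((hξ' t).hasDerivAt.fun_pow 2).const_sub 1).congr_deriv (by push_cast; ring)
  have hrhs := ((((((hξ t).hasDerivAt.const_mul (-2 * k)).exp).const_mul (n / (2 * k))).mul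
    (hP.rpow_const (p := 1 - k) (Or.inl hpos.ne'))).sub (hP.const_mul ((n - 2 * k) / (2 * k))))
  refine (hrhs.congr_of_eventuallyEq (.of_forall hode)).congr_deriv ?_
  have hW := mul_mul_eq_of_eq_div_mul_mul_sub hk (hode t)
  rw [rpow_sub hpos (1 - k) 1, rpow_one]
  generalize (1 - deriv ξ t ^ 2) ^ (1 - k) = R at hW ⊢
  generalize exp (-2 * k * ξ t) = E at hW ⊢
  have hP0 := hpos.ne'
  field_simp
  linear_combination
    (-deriv ξ t * k * (1 - deriv ξ t ^ 2) + (k - 1) * deriv ξ t * deriv (deriv ξ) t) * hW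

/-- `φ⁺ = translationSolution 1 ξ'` and `φ⁻ = translationSolution (-1) ξ'`. -/
noncomputable def translationSolution (ε : ℝ) (u : ℝ → ℝ) (t : ℝ) : ℝ :=
  exp (ε * t) * (1 - ε * u t)

lemma hasDerivAt_translationSolution (ε : ℝ) {u u' : ℝ → ℝ} {t : ℝ}
    (hu : HasDerivAt u (u' t) t) :
    HasDerivAt (translationSolution ε u) (exp (ε * t) * (ε * (1 - ε * u t) - ε * u' t)) t :=
  ((((hasDerivAt_id t).const_mul ε).exp).mul ((hu.const_mul ε).const_sub 1)).congr_deriv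
    (by simp only [id, mul_one]; ring)

lemma deriv_deriv_translationSolution (ε : ℝ) {u u' : ℝ → ℝ} {w t : ℝ}
    (hu : ∀ s, HasDerivAt u (u' s) s) (hu' : HasDerivAt u' w t) :
    deriv (deriv (translationSolution ε u)) t
      = exp (ε * t) * (ε * (ε * (1 - ε * u t) - ε * u' t) - ε * (ε * u' t + w)) := by
  have hφ' : deriv (translationSolution ε u)
      = fun s => exp (ε * s) * (ε * (1 - ε * u s) - ε * u' s) :=
    funext fun s => (hasDerivAt_translationSolution ε (hu s)).deriv
  rw [hφ']
  exact ((((hasDerivAt_id t).const_mul ε).exp).mul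
    ((((hu t).const_mul ε).const_sub 1).const_mul ε |>.sub (hu'.const_mul ε))).deriv.trans
    (by simp only [id, mul_one, Pi.sub_apply]; ring)

lemma translationSolution_linearized_identity {n k ε u v w E : ℝ} (hε : ε = 1 ∨ ε = -1)
    (hk : k ≠ 0) (hn : n - 1 ≠ 0) (hP : 1 - u ^ 2 ≠ 0)
    (hw : w = u * ((2 * k * v + (n - 2 * k) * (1 - u ^ 2)) * ((k - 1) * v / (1 - u ^ 2) - k)
        + (n - 2 * k) * v) / k) :
    E * (ε * (ε * (1 - ε * u) - ε * v) - ε * (ε * v + w))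
      + (-u * ((k - 1) * v + (n - 2 * k) / 2 * (1 - u ^ 2))) / ((1 - u ^ 2) / 2)
        * (E * (ε * (1 - ε * u) - ε * v))
      + (-(n - 1) * (((k - 1) / (n - 1) * v + (n - 2 * k + 1) / (n - 1) * (1 - u ^ 2) / 2)
          / ((1 - u ^ 2) / 2))
        + (2 * k * v + (n - 2 * k) * (1 - u ^ 2))) * (E * (1 - ε * u)) = 0 := by
  subst hw
  rcases hε with rfl | rfl <;>
  · field_simp
    ring

theorem translation_solutions_of_linearized_general (n k : ℕ) (hn : 3 ≤ n) (hk : 2 ≤ k)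
    (h : ℝ) (ξ : ℝ → ℝ) (hξ : ContDiff ℝ 3 ξ)
    (hpos : ∀ t, 0 < 1 - (deriv ξ t) ^ 2)
    (hode : ∀ t, deriv (deriv ξ) t
      = (n : ℝ) / (2 * k) * Real.exp (-2 * k * ξ t)
          * (1 - (deriv ξ t) ^ 2) ^ ((1 : ℝ) - k)
        - ((n : ℝ) - 2 * k) / (2 * k) * (1 - (deriv ξ t) ^ 2))
    (hfi : ∀ t, Real.exp ((2 * (k : ℝ) - n) * ξ t) * (1 - (deriv ξ t) ^ 2) ^ k
      = Real.exp (-(n : ℝ) * ξ t) + h) :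
    ∀ φ : ℝ → ℝ,
      (φ = fun t => Real.exp t * (1 - deriv ξ t)) ∨
      (φ = fun t => Real.exp (-t) * (1 + deriv ξ t)) →
      ∀ t,
        deriv (deriv φ) t
          + (-(deriv ξ t) * (((k : ℝ) - 1) * deriv (deriv ξ) t
                + ((n : ℝ) - 2 * k) / 2 * (1 - (deriv ξ t) ^ 2)))
            / ((1 - (deriv ξ t) ^ 2) / 2) * deriv φ t
          + (-((n : ℝ) - 1) *
              ((((k : ℝ) - 1) / ((n : ℝ) - 1) * deriv (deriv ξ) t
                  + ((n : ℝ) - 2 * k + 1) / ((n : ℝ) - 1) * (1 - (deriv ξ t) ^ 2) / 2)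
                / ((1 - (deriv ξ t) ^ 2) / 2))
            + (n : ℝ) * Real.exp (-(n : ℝ) * ξ t) / (Real.exp (-(n : ℝ) * ξ t) + h)
              * (1 - (deriv ξ t) ^ 2)) * φ t = 0 := by
  intro φ hφ t
  obtain ⟨ε, hε, rfl⟩ : ∃ ε : ℝ, (ε = 1 ∨ ε = -1) ∧ φ = translationSolution ε (deriv ξ) := by
    rcases hφ with rfl | rfl
    exacts [⟨1, .inl rfl, funext fun s => by simp [translationSolution]⟩,
      ⟨-1, .inr rfl, funext fun s => by simp [translationSolution]⟩]
  have hk0 : (k : ℝ) ≠ 0 := by exact_mod_cast (by omega : k ≠ 0)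
  have hn1 : (n : ℝ) - 1 ≠ 0 := by
    have : (3 : ℝ) ≤ n := by exact_mod_cast hn
    linarith
  have hξ' : ContDiff ℝ 2 (deriv ξ) := (contDiff_succ_iff_deriv (n := 2).mp hξ).2.2
  have hu : ∀ s, HasDerivAt (deriv ξ) (deriv (deriv ξ) s) s :=
    fun s => (hξ'.differentiable two_ne_zero s).hasDerivAt
  rw [deriv_deriv_translationSolution ε hu (hasDerivAt_deriv_deriv_of_ode hk0
      (hξ.differentiable (by norm_num)) (hξ'.differentiable two_ne_zero) hode (hpos t)),
    (hasDerivAt_translationSolution ε (hu t)).deriv, mul_exp_div_add_mul_eq (hpos t) (hfi t),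
    mul_mul_eq_of_eq_div_mul_mul_sub hk0 (hode t)]
  exact translationSolution_linearized_identity hε hk0 hn1 (hpos t).ne' rfl

/-- For a periodic radial solution `ξ = ξ_h` (`h > 0`) of the σ_k-Yamabe ODE,
`φ⁺(t) = e^t(1-ξ'(t))` and `φ⁻(t) = e^(-t)(1+ξ'(t))` solve the linearized ODE
`φ'' + (B/A)φ' + [-(n-1)C/A + (n e^(-nξ)/(e^(-nξ)+h))(1-ξ'²)]φ = 0`. -/
theorem translation_solutions_of_linearized (n k : ℕ) (hn : 3 ≤ n) (hk : 2 ≤ k)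
    (hkn : k ≤ n) (h : ℝ) (hh : 0 < h) (ξ : ℝ → ℝ) (hξ : ContDiff ℝ 3 ξ)
    (T : ℝ) (hT : 0 < T) (hper : Function.Periodic ξ T)
    (hpos : ∀ t, 0 < 1 - (deriv ξ t) ^ 2)
    (hode : ∀ t, deriv (deriv ξ) t
      = (n : ℝ) / (2 * k) * Real.exp (-2 * k * ξ t)
          * (1 - (deriv ξ t) ^ 2) ^ ((1 : ℝ) - k)
        - ((n : ℝ) - 2 * k) / (2 * k) * (1 - (deriv ξ t) ^ 2))
    (hfi : ∀ t, Real.exp ((2 * (k : ℝ) - n) * ξ t) * (1 - (deriv ξ t) ^ 2) ^ k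
      = Real.exp (-(n : ℝ) * ξ t) + h) :
    ∀ φ : ℝ → ℝ,
      (φ = fun t => Real.exp t * (1 - deriv ξ t)) ∨
      (φ = fun t => Real.exp (-t) * (1 + deriv ξ t)) →
      ∀ t,
        deriv (deriv φ) t
          + (-(deriv ξ t) * (((k : ℝ) - 1) * deriv (deriv ξ) t
                + ((n : ℝ) - 2 * k) / 2 * (1 - (deriv ξ t) ^ 2)))
            / ((1 - (deriv ξ t) ^ 2) / 2) * deriv φ t
          + (-((n : ℝ) - 1) *
              ((((k : ℝ) - 1) / ((n : ℝ) - 1) * deriv (deriv ξ) t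
                  + ((n : ℝ) - 2 * k + 1) / ((n : ℝ) - 1) * (1 - (deriv ξ t) ^ 2) / 2)
                / ((1 - (deriv ξ t) ^ 2) / 2))
            + (n : ℝ) * Real.exp (-(n : ℝ) * ξ t) / (Real.exp (-(n : ℝ) * ξ t) + h)
              * (1 - (deriv ξ t) ^ 2)) * φ t = 0 :=
  translation_solutions_of_linearized_general n k hn hk h ξ hξ hpos hode hfi
end

section
/- Let n ≥ 3, 2 ≤ k ≤ n, and let ξ satisfy 0 < 1 - ξ'², the radial σ_k-Yamabe ODE, and the first integral e^((2k-n)ξ)(1-ξ'²)^k = e^(-nξ) + h. Set V(t) = e^((1 - n/(2k))ξ(t))·(e^(-nξ(t)) + h)^((k-1)/(2k)). Then 2·V'(t)/V(t) = [1 - (n-1)·C(t)/A(t)]·ξ'(t), where A and C are as in the linearized operator; i.e. the substitution ψ = Vφ eliminates the first-order term of L_j. -/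
/-!
Writing `V = e^(aξ) P^c` with `P = e^(-nξ) + h`, the logarithmic derivative of `V` is
`(a - n c e^(-nξ)/P) ξ'`. On the other side, the first integral turns the nonlinear term
`e^(-2kξ)(1-ξ'²)^(1-k)` of the ODE into `(e^(-nξ)/P)(1-ξ'²)`, so that `ξ''` is affine in
`e^(-nξ)/P` and `1 - (n-1)C/A` collapses to `(2k-n)/k - (n(k-1)/k) e^(-nξ)/P`, which is
`2(a - n c e^(-nξ)/P)` for `a = 1 - n/(2k)`, `c = (k-1)/(2k)`.
-/

open Real

lemma logDeriv_exp_mul_mul_rpow_exp_mul_add {f : ℝ → ℝ} {t : ℝ} (hf : DifferentiableAt ℝ f t)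
    (a b c h : ℝ) (hP : 0 < exp (b * f t) + h) :
    logDeriv (fun s => exp (a * f s) * (exp (b * f s) + h) ^ c) t
      = (a + b * c * (exp (b * f t) / (exp (b * f t) + h))) * deriv f t := by
  have hf' := hf.hasDerivAt
  have hV : HasDerivAt (fun s => exp (a * f s) * (exp (b * f s) + h) ^ c) _ t :=
    ((hf'.const_mul a).exp).mul
      ((((hf'.const_mul b).exp).add_const h).rpow_const (p := c) (Or.inl hP.ne'))
  rw [logDeriv_apply, hV.deriv, rpow_sub hP, rpow_one]
  have hPc : (exp (b * f t) + h) ^ c ≠ 0 := (rpow_pos_of_pos hP c).ne'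
  generalize (exp (b * f t) + h) ^ c = Pc at hPc ⊢
  field_simp

lemma exp_mul_rpow_one_sub_of_first_integral {n x Q h : ℝ} {k : ℕ} (hQ : 0 < Q)
    (hfi : exp ((2 * k - n) * x) * Q ^ k = exp (-n * x) + h) :
    exp (-2 * k * x) * Q ^ ((1 : ℝ) - k) = exp (-n * x) / (exp (-n * x) + h) * Q := by
  have hexp : exp (-2 * k * x) * exp ((2 * k - n) * x) = exp (-n * x) := by
    rw [← exp_add]; ring_nf
  rw [rpow_sub hQ, rpow_one, rpow_natCast, ← hfi, ← hexp]
  have : 0 < Q ^ k := pow_pos hQ k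
  field_simp

lemma one_sub_mul_C_div_A_of_ode {n k ξ'' Q r : ℝ} (hn : n - 1 ≠ 0) (hk : k ≠ 0) (hQ : Q ≠ 0)
    (hode : ξ'' = n / (2 * k) * (r * Q) - (n - 2 * k) / (2 * k) * Q) :
    1 - (n - 1) * (((k - 1) / (n - 1) * ξ'' + (n - 2 * k + 1) / (n - 1) * Q / 2) / (Q / 2))
      = (2 * k - n) / k - n * (k - 1) / k * r := by
  subst hode
  field_simp
  ring

theorem V_eliminates_first_order_term_general (n k : ℕ) (hn : 3 ≤ n) (hk : 2 ≤ k)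
    (h : ℝ) (ξ : ℝ → ℝ) (hξ : ContDiff ℝ 2 ξ)
    (hpos : ∀ t, 0 < 1 - (deriv ξ t) ^ 2)
    (hode : ∀ t, deriv (deriv ξ) t
      = (n : ℝ) / (2 * k) * Real.exp (-2 * k * ξ t)
          * (1 - (deriv ξ t) ^ 2) ^ ((1 : ℝ) - k)
        - ((n : ℝ) - 2 * k) / (2 * k) * (1 - (deriv ξ t) ^ 2))
    (hfi : ∀ t, Real.exp ((2 * (k : ℝ) - n) * ξ t) * (1 - (deriv ξ t) ^ 2) ^ k
      = Real.exp (-(n : ℝ) * ξ t) + h) :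
    ∀ t,
      2 * deriv (fun s => Real.exp ((1 - (n : ℝ) / (2 * k)) * ξ s)
            * (Real.exp (-(n : ℝ) * ξ s) + h) ^ (((k : ℝ) - 1) / (2 * k))) t
        / (Real.exp ((1 - (n : ℝ) / (2 * k)) * ξ t)
            * (Real.exp (-(n : ℝ) * ξ t) + h) ^ (((k : ℝ) - 1) / (2 * k)))
      = (1 - ((n : ℝ) - 1) *
          ((((k : ℝ) - 1) / ((n : ℝ) - 1) * deriv (deriv ξ) t
              + ((n : ℝ) - 2 * k + 1) / ((n : ℝ) - 1) * (1 - (deriv ξ t) ^ 2) / 2)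
            / ((1 - (deriv ξ t) ^ 2) / 2))) * deriv ξ t := by
  intro t
  have hP : 0 < exp (-(n : ℝ) * ξ t) + h := by
    rw [← hfi t]
    exact mul_pos (exp_pos _) (pow_pos (hpos t) k)
  have hn1 : (n : ℝ) - 1 ≠ 0 := by
    have : (3 : ℝ) ≤ n := by exact_mod_cast hn
    linarith
  have hk0 : (k : ℝ) ≠ 0 := by positivity
  have hode' := hode t
  rw [mul_assoc, exp_mul_rpow_one_sub_of_first_integral (hpos t) (hfi t)] at hode'
  rw [one_sub_mul_C_div_A_of_ode hn1 hk0 (hpos t).ne' hode', mul_div_assoc, ← logDeriv_apply,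
    logDeriv_exp_mul_mul_rpow_exp_mul_add ((hξ.differentiable two_ne_zero) t) _ _ _ _ hP]
  field_simp
  ring

/-- With `V(t) = e^((1-n/(2k))ξ(t))·(e^(-nξ(t))+h)^((k-1)/(2k))`, one has
`2V'/V = [1 - (n-1)C/A]·ξ'`, i.e. the substitution `ψ = Vφ` eliminates the
first-order term of the linearized σ_k-Yamabe operator. -/
theorem V_eliminates_first_order_term (n k : ℕ) (hn : 3 ≤ n) (hk : 2 ≤ k)
    (hkn : k ≤ n) (h : ℝ) (ξ : ℝ → ℝ) (hξ : ContDiff ℝ 2 ξ)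
    (hpos : ∀ t, 0 < 1 - (deriv ξ t) ^ 2)
    (hode : ∀ t, deriv (deriv ξ) t
      = (n : ℝ) / (2 * k) * Real.exp (-2 * k * ξ t)
          * (1 - (deriv ξ t) ^ 2) ^ ((1 : ℝ) - k)
        - ((n : ℝ) - 2 * k) / (2 * k) * (1 - (deriv ξ t) ^ 2))
    (hfi : ∀ t, Real.exp ((2 * (k : ℝ) - n) * ξ t) * (1 - (deriv ξ t) ^ 2) ^ k
      = Real.exp (-(n : ℝ) * ξ t) + h) :
    ∀ t,
      2 * deriv (fun s => Real.exp ((1 - (n : ℝ) / (2 * k)) * ξ s)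
            * (Real.exp (-(n : ℝ) * ξ s) + h) ^ (((k : ℝ) - 1) / (2 * k))) t
        / (Real.exp ((1 - (n : ℝ) / (2 * k)) * ξ t)
            * (Real.exp (-(n : ℝ) * ξ t) + h) ^ (((k : ℝ) - 1) / (2 * k)))
      = (1 - ((n : ℝ) - 1) *
          ((((k : ℝ) - 1) / ((n : ℝ) - 1) * deriv (deriv ξ) t
              + ((n : ℝ) - 2 * k + 1) / ((n : ℝ) - 1) * (1 - (deriv ξ t) ^ 2) / 2)
            / ((1 - (deriv ξ t) ^ 2) / 2))) * deriv ξ t :=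
  V_eliminates_first_order_term_general n k hn hk h ξ hξ hpos hode hfi
end

section
/- Let n ≥ 3, 2 ≤ k ≤ n with 2k ≤ n, h > 0, and let ξ satisfy the first integral e^((2k-n)ξ)(1-ξ'²)^k = e^(-nξ) + h with 0 < 1-ξ'² ≤ 1 and ξ ≥ 0. Then for every eigenvalue λ ≥ 2n, the potential E(t) = -V''(t)/V(t) - λ·C(t)/A(t) + (n e^(-nξ(t))/(e^(-nξ(t))+h))·(1-ξ'(t)²), with V(t) = e^((1-n/(2k))ξ(t))(e^(-nξ(t))+h)^((k-1)/(2k)), satisfies E(t) ≤ -2 - 2/(n-1) < -2 for all t (in particular E(t) ≤ -min(2 + 2/(n-1), (n+1)/2)). -/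
/-!
Write `S = e^{-nξ}/(e^{-nξ}+h) ∈ [0,1]` and `Q = 1 - ξ'² ∈ (0,1]`. The first integral turns the
σ_k-equation into `ξ'' = Q (nS - n + 2k)/(2k)`, and since `S' = -nξ'S(1-S)`, the quotient `V''/V`
is polynomial in `ξ'`, `ξ''` and `S`. So `E = (1-Q) X₀ + Q X₁ - λ Z` where `Z = C/A`, `X₀ ≤ 0`
is minus a square minus a multiple of `S(1-S)`, and `X₁`, the value of `E + λZ` at critical points
of `ξ`, is a quadratic in `S`. Now `Z ≥ 1/(n-1)` because `n ≥ 2k`, and `X₁ ≤ 2n (Z - 1/(n-1))`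
because the difference is concave in `S` and nonnegative at `S = 0, 1` (at `S = 1` it is
`(n² - 3n - 2)/(2(n-1))`, and `n ≥ 2k ≥ 4`). With `λ ≥ 2n` the convex combination gives
`E ≤ -2n/(n-1) = -2 - 2/(n-1)`.
-/

open Real

section Derivatives

variable {ξ : ℝ → ℝ} {a b c h r : ℝ}

theorem hasDerivAt_exp_div_exp_add (hh : 0 < h) (hξ : DifferentiableAt ℝ ξ r) :
    HasDerivAt (fun s => exp (c * ξ s) / (exp (c * ξ s) + h))
      (c * deriv ξ r * (exp (c * ξ r) / (exp (c * ξ r) + h)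
        * (1 - exp (c * ξ r) / (exp (c * ξ r) + h)))) r := by
  have hE := (hξ.hasDerivAt.const_mul c).exp
  have hW : exp (c * ξ r) + h ≠ 0 := by positivity
  refine (hE.div (hE.add_const h) hW).congr_deriv ?_
  field_simp

theorem hasDerivAt_exp_mul_mul_rpow (hh : 0 < h) (hξ : DifferentiableAt ℝ ξ r) :
    HasDerivAt (fun s => exp (a * ξ s) * (exp (c * ξ s) + h) ^ b)
      (exp (a * ξ r) * (exp (c * ξ r) + h) ^ b
        * (deriv ξ r * (a + b * c * (exp (c * ξ r) / (exp (c * ξ r) + h))))) r := by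
  have hW : 0 < exp (c * ξ r) + h := by positivity
  have hE := (hξ.hasDerivAt.const_mul c).exp
  refine ((hξ.hasDerivAt.const_mul a).exp.mul
    ((hE.add_const h).rpow_const (p := b) (.inl hW.ne'))).congr_deriv ?_
  rw [rpow_sub_one hW.ne']
  field_simp

theorem deriv_deriv_exp_mul_mul_rpow (hh : 0 < h) (hξ : Differentiable ℝ ξ)
    (hξ' : DifferentiableAt ℝ (deriv ξ) r) :
    deriv (deriv (fun s => exp (a * ξ s) * (exp (c * ξ s) + h) ^ b)) r
      = exp (a * ξ r) * (exp (c * ξ r) + h) ^ b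
        * (deriv ξ r ^ 2 * (a + b * c * (exp (c * ξ r) / (exp (c * ξ r) + h))) ^ 2
          + deriv (deriv ξ) r * (a + b * c * (exp (c * ξ r) / (exp (c * ξ r) + h)))
          + b * c ^ 2 * deriv ξ r ^ 2 * (exp (c * ξ r) / (exp (c * ξ r) + h)
            * (1 - exp (c * ξ r) / (exp (c * ξ r) + h)))) := by
  have hV : deriv (fun s => exp (a * ξ s) * (exp (c * ξ s) + h) ^ b) = fun s =>
      exp (a * ξ s) * (exp (c * ξ s) + h) ^ b
        * (deriv ξ s * (a + b * c * (exp (c * ξ s) / (exp (c * ξ s) + h)))) :=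
    funext fun s => (hasDerivAt_exp_mul_mul_rpow hh (hξ s)).deriv
  rw [hV]
  have hS := ((hasDerivAt_exp_div_exp_add (c := c) hh (hξ r)).const_mul (b * c)).const_add a
  refine ((hasDerivAt_exp_mul_mul_rpow hh (hξ r)).mul (hξ'.hasDerivAt.mul hS)).deriv.trans ?_
  simp only [Pi.mul_apply]
  ring

end Derivatives

theorem secondDeriv_eq_of_firstIntegral {n h x p y : ℝ} {k : ℕ} (hq : 0 < 1 - p ^ 2)
    (hode : y = n / (2 * k) * exp (-2 * k * x) * (1 - p ^ 2) ^ ((1 : ℝ) - k)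
        - (n - 2 * k) / (2 * k) * (1 - p ^ 2))
    (hfi : exp ((2 * (k : ℝ) - n) * x) * (1 - p ^ 2) ^ k = exp (-n * x) + h) :
    y = (1 - p ^ 2) * (n * (exp (-n * x) / (exp (-n * x) + h)) - n + 2 * k) / (2 * k) := by
  have hexp : exp (-2 * k * x) = exp (-n * x) / exp ((2 * (k : ℝ) - n) * x) := by
    rw [← exp_sub]; ring_nf
  have hpow : (1 - p ^ 2) ^ ((1 : ℝ) - k) = (1 - p ^ 2) / (1 - p ^ 2) ^ k := by
    rw [rpow_sub hq, rpow_one, rpow_natCast]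
  have hS : exp (-2 * k * x) * (1 - p ^ 2) ^ ((1 : ℝ) - k)
      = (1 - p ^ 2) * (exp (-n * x) / (exp (-n * x) + h)) := by
    rw [hexp, hpow, ← hfi]
    field_simp
  rw [hode]
  linear_combination n / (2 * k) * hS

section Algebra

variable {N K S : ℝ}

theorem one_div_sub_one_le_C_div_A (hK : 1 ≤ K) (hKN : 2 * K ≤ N) (hS : 0 ≤ S) :
    1 / (N - 1) ≤ (K - 1) / (N - 1) * ((N * S - N + 2 * K) / K) + (N - 2 * K + 1) / (N - 1) := by
  have hN : 0 < N - 1 := by linarith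
  have hK0 : 0 < K := by linarith
  have e : (K - 1) / (N - 1) * ((N * S - N + 2 * K) / K) + (N - 2 * K + 1) / (N - 1) - 1 / (N - 1)
      = ((K - 1) * N * S + (N - 2 * K)) / (K * (N - 1)) := by
    field_simp
    ring
  rw [← sub_nonneg, e]
  have : 0 ≤ (K - 1) * N * S := by
    have : 0 ≤ N := by linarith
    have : 0 ≤ K - 1 := by linarith
    positivity
  exact div_nonneg (by linarith) (by positivity)

theorem critical_point_term_le (hK : 2 ≤ K) (hKN : 2 * K ≤ N) (hS0 : 0 ≤ S) (hS1 : S ≤ 1) :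
    (N * S - N + 2 * K) / (2 * K) * -(1 - N / (2 * K) + (K - 1) / (2 * K) * -N * S) + N * S
      ≤ 2 * N * ((K - 1) / (N - 1) * ((N * S - N + 2 * K) / K) + (N - 2 * K + 1) / (N - 1)
        - 1 / (N - 1)) := by
  have hN : 0 < N - 1 := by linarith
  have hK0 : 0 < K := by linarith
  have e : 2 * N * ((K - 1) / (N - 1) * ((N * S - N + 2 * K) / K) + (N - 2 * K + 1) / (N - 1)
        - 1 / (N - 1)) - ((N * S - N + 2 * K) / (2 * K) * -(1 - N / (2 * K) + (K - 1) / (2 * K) * -N * S) + N * S)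
      = (1 - S) * (2 * N * (N - 2 * K) / (K * (N - 1)) + (N - 2 * K) ^ 2 / (4 * K ^ 2))
        + S * ((N ^ 2 - 3 * N - 2) / (2 * (N - 1))) + N ^ 2 * (K - 1) / (4 * K ^ 2) * (S * (1 - S)) := by
    field_simp
    ring
  -- the difference is concave in `S`, so it dominates its chord between `S = 0` and `S = 1`
  rw [← sub_nonneg, e]
  have hS1' : 0 ≤ 1 - S := by linarith
  have hm : 0 ≤ N - 2 * K := by linarith
  have hN0 : 0 ≤ N := by linarith
  have hK1 : 0 ≤ K - 1 := by linarith
  have hend : 0 ≤ N ^ 2 - 3 * N - 2 := by nlinarith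
  positivity

theorem reduced_potential_le {Q lam : ℝ} (hK : 2 ≤ K) (hKN : 2 * K ≤ N) (hS0 : 0 ≤ S) (hS1 : S ≤ 1)
    (hQ0 : 0 ≤ Q) (hQ1 : Q ≤ 1) (hlam : 2 * N ≤ lam) :
    -((1 - Q) * (1 - N / (2 * K) + (K - 1) / (2 * K) * -N * S) ^ 2
        + Q * (N * S - N + 2 * K) / (2 * K) * (1 - N / (2 * K) + (K - 1) / (2 * K) * -N * S)
        + (K - 1) / (2 * K) * N ^ 2 * (1 - Q) * (S * (1 - S)))
      - lam * ((K - 1) / (N - 1) * ((N * S - N + 2 * K) / K) + (N - 2 * K + 1) / (N - 1))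
      + N * S * Q ≤ -2 - 2 / (N - 1) := by
  set Z := (K - 1) / (N - 1) * ((N * S - N + 2 * K) / K) + (N - 2 * K + 1) / (N - 1)
  set g := 1 - N / (2 * K) + (K - 1) / (2 * K) * -N * S
  have hN : 0 < N - 1 := by linarith
  have hZ : 1 / (N - 1) ≤ Z := one_div_sub_one_le_C_div_A (by linarith) hKN hS0
  have hX0 : 0 ≤ g ^ 2 + (K - 1) / (2 * K) * N ^ 2 * (S * (1 - S)) := by
    have : 0 ≤ 1 - S := by linarith
    have : 0 ≤ K - 1 := by linarith
    have : 0 ≤ K := by linarith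
    positivity
  have hX1 : (N * S - N + 2 * K) / (2 * K) * -g + N * S ≤ 2 * N * (Z - 1 / (N - 1)) :=
    critical_point_term_le hK hKN hS0 hS1
  have hbound : -2 - 2 / (N - 1) = -(2 * N) * (1 / (N - 1)) := by
    field_simp
    ring
  rw [hbound]
  have hQX1 := mul_le_mul_of_nonneg_left hX1 hQ0
  have hQX0 := mul_nonneg (sub_nonneg.2 hQ1) hX0
  have hlamZ := mul_le_mul_of_nonneg_right hlam (hZ.trans' (by positivity))
  have hQZ := mul_le_mul_of_nonneg_left hZ (mul_nonneg (sub_nonneg.2 hQ1) (by linarith : (0 : ℝ) ≤ 2 * N))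
  linear_combination hQX1 + hQX0 + hlamZ + hQZ

end Algebra

theorem potential_bound_general (n k : ℕ) (hk : 2 ≤ k) (hkn : 2 * k ≤ n)
    (h : ℝ) (hh : 0 < h) (ξ : ℝ → ℝ) (hξ : ContDiff ℝ 2 ξ)
    (hpos : ∀ t, 0 < 1 - (deriv ξ t) ^ 2) (hle : ∀ t, 1 - (deriv ξ t) ^ 2 ≤ 1)
    (hode : ∀ t, deriv (deriv ξ) t
      = (n : ℝ) / (2 * k) * Real.exp (-2 * k * ξ t)
          * (1 - (deriv ξ t) ^ 2) ^ ((1 : ℝ) - k)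
        - ((n : ℝ) - 2 * k) / (2 * k) * (1 - (deriv ξ t) ^ 2))
    (hfi : ∀ t, Real.exp ((2 * (k : ℝ) - n) * ξ t) * (1 - (deriv ξ t) ^ 2) ^ k
      = Real.exp (-(n : ℝ) * ξ t) + h) :
    ∀ t, ∀ lam : ℝ, 2 * (n : ℝ) ≤ lam →
      (-(deriv (deriv (fun s => Real.exp ((1 - (n : ℝ) / (2 * k)) * ξ s)
              * (Real.exp (-(n : ℝ) * ξ s) + h) ^ (((k : ℝ) - 1) / (2 * k)))) t
            / (Real.exp ((1 - (n : ℝ) / (2 * k)) * ξ t)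
              * (Real.exp (-(n : ℝ) * ξ t) + h) ^ (((k : ℝ) - 1) / (2 * k))))
        - lam * ((((k : ℝ) - 1) / ((n : ℝ) - 1) * deriv (deriv ξ) t
              + ((n : ℝ) - 2 * k + 1) / ((n : ℝ) - 1) * (1 - (deriv ξ t) ^ 2) / 2)
            / ((1 - (deriv ξ t) ^ 2) / 2))
        + (n : ℝ) * Real.exp (-(n : ℝ) * ξ t) / (Real.exp (-(n : ℝ) * ξ t) + h)
          * (1 - (deriv ξ t) ^ 2)
        ≤ -2 - 2 / ((n : ℝ) - 1)) ∧
      (-2 - 2 / ((n : ℝ) - 1) < -2) ∧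
      (-(deriv (deriv (fun s => Real.exp ((1 - (n : ℝ) / (2 * k)) * ξ s)
              * (Real.exp (-(n : ℝ) * ξ s) + h) ^ (((k : ℝ) - 1) / (2 * k)))) t
            / (Real.exp ((1 - (n : ℝ) / (2 * k)) * ξ t)
              * (Real.exp (-(n : ℝ) * ξ t) + h) ^ (((k : ℝ) - 1) / (2 * k))))
        - lam * ((((k : ℝ) - 1) / ((n : ℝ) - 1) * deriv (deriv ξ) t
              + ((n : ℝ) - 2 * k + 1) / ((n : ℝ) - 1) * (1 - (deriv ξ t) ^ 2) / 2)
            / ((1 - (deriv ξ t) ^ 2) / 2))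
        + (n : ℝ) * Real.exp (-(n : ℝ) * ξ t) / (Real.exp (-(n : ℝ) * ξ t) + h)
          * (1 - (deriv ξ t) ^ 2)
        ≤ -min (2 + 2 / ((n : ℝ) - 1)) (((n : ℝ) + 1) / 2)) := by
  have hK : (2 : ℝ) ≤ k := by exact_mod_cast hk
  have hKN : 2 * (k : ℝ) ≤ n := by exact_mod_cast hkn
  have hξ1 : Differentiable ℝ ξ := hξ.differentiable (by norm_num)
  have hξ2 : Differentiable ℝ (deriv ξ) :=
    ((contDiff_succ_iff_deriv (n := 1)).mp hξ).2.2.differentiable one_ne_zero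
  intro t lam hlam
  refine (fun hE => ⟨hE, ?lt, hE.trans ?min⟩) ?main
  case lt =>
    have : (0 : ℝ) < 2 / (n - 1) := div_pos two_pos (by linarith)
    linarith
  case min => linarith [min_le_left (2 + 2 / ((n : ℝ) - 1)) (((n : ℝ) + 1) / 2)]
  have hW : 0 < exp (-(n : ℝ) * ξ t) + h := by positivity
  rw [deriv_deriv_exp_mul_mul_rpow hh hξ1 (hξ2 t), mul_div_cancel_left₀ _ (by positivity),
    mul_div_assoc (n : ℝ), secondDeriv_eq_of_firstIntegral (hpos t) (hode t) (hfi t)]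
  set S := exp (-(n : ℝ) * ξ t) / (exp (-(n : ℝ) * ξ t) + h)
  set Q := 1 - deriv ξ t ^ 2
  have hS0 : 0 ≤ S := by positivity
  have hS1 : S ≤ 1 := (div_le_one hW).2 (by linarith [exp_pos (-(n : ℝ) * ξ t)])
  have hCA : ((k - 1) / (n - 1) * (Q * (n * S - n + 2 * k) / (2 * k)) + (n - 2 * k + 1) / (n - 1) * Q / 2)
      / (Q / 2) = (k - 1) / (n - 1) * ((n * S - n + 2 * k) / k) + (n - 2 * k + 1) / (n - 1) := by
    have : Q ≠ 0 := (hpos t).ne'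
    field_simp
  rw [hCA]
  linear_combination reduced_potential_le hK hKN hS0 hS1 (hpos t).le (hle t) hlam

/-- Bound on the potential `E(t) = -V''/V - λ·C/A + (n e^(-nξ)/(e^(-nξ)+h))(1-ξ'²)`
of the normal-form linearized σ_k-Yamabe equation: for every spherical eigenvalue
`λ ≥ 2n`, `E(t) ≤ -2 - 2/(n-1) < -2`, and in particular
`E(t) ≤ -min(2 + 2/(n-1), (n+1)/2)`. -/
theorem potential_bound (n k : ℕ) (hn : 3 ≤ n) (hk : 2 ≤ k) (hkn : 2 * k ≤ n)
    (h : ℝ) (hh : 0 < h) (ξ : ℝ → ℝ) (hξ : ContDiff ℝ 2 ξ)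
    (hpos : ∀ t, 0 < 1 - (deriv ξ t) ^ 2) (hle : ∀ t, 1 - (deriv ξ t) ^ 2 ≤ 1)
    (hxi : ∀ t, 0 ≤ ξ t)
    (hode : ∀ t, deriv (deriv ξ) t
      = (n : ℝ) / (2 * k) * Real.exp (-2 * k * ξ t)
          * (1 - (deriv ξ t) ^ 2) ^ ((1 : ℝ) - k)
        - ((n : ℝ) - 2 * k) / (2 * k) * (1 - (deriv ξ t) ^ 2))
    (hfi : ∀ t, Real.exp ((2 * (k : ℝ) - n) * ξ t) * (1 - (deriv ξ t) ^ 2) ^ k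
      = Real.exp (-(n : ℝ) * ξ t) + h) :
    ∀ t, ∀ lam : ℝ, 2 * (n : ℝ) ≤ lam →
      (-(deriv (deriv (fun s => Real.exp ((1 - (n : ℝ) / (2 * k)) * ξ s)
              * (Real.exp (-(n : ℝ) * ξ s) + h) ^ (((k : ℝ) - 1) / (2 * k)))) t
            / (Real.exp ((1 - (n : ℝ) / (2 * k)) * ξ t)
              * (Real.exp (-(n : ℝ) * ξ t) + h) ^ (((k : ℝ) - 1) / (2 * k))))
        - lam * ((((k : ℝ) - 1) / ((n : ℝ) - 1) * deriv (deriv ξ) t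
              + ((n : ℝ) - 2 * k + 1) / ((n : ℝ) - 1) * (1 - (deriv ξ t) ^ 2) / 2)
            / ((1 - (deriv ξ t) ^ 2) / 2))
        + (n : ℝ) * Real.exp (-(n : ℝ) * ξ t) / (Real.exp (-(n : ℝ) * ξ t) + h)
          * (1 - (deriv ξ t) ^ 2)
        ≤ -2 - 2 / ((n : ℝ) - 1)) ∧
      (-2 - 2 / ((n : ℝ) - 1) < -2) ∧
      (-(deriv (deriv (fun s => Real.exp ((1 - (n : ℝ) / (2 * k)) * ξ s)
              * (Real.exp (-(n : ℝ) * ξ s) + h) ^ (((k : ℝ) - 1) / (2 * k)))) t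
            / (Real.exp ((1 - (n : ℝ) / (2 * k)) * ξ t)
              * (Real.exp (-(n : ℝ) * ξ t) + h) ^ (((k : ℝ) - 1) / (2 * k))))
        - lam * ((((k : ℝ) - 1) / ((n : ℝ) - 1) * deriv (deriv ξ) t
              + ((n : ℝ) - 2 * k + 1) / ((n : ℝ) - 1) * (1 - (deriv ξ t) ^ 2) / 2)
            / ((1 - (deriv ξ t) ^ 2) / 2))
        + (n : ℝ) * Real.exp (-(n : ℝ) * ξ t) / (Real.exp (-(n : ℝ) * ξ t) + h)
          * (1 - (deriv ξ t) ^ 2)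
        ≤ -min (2 + 2 / ((n : ℝ) - 1)) (((n : ℝ) + 1) / 2)) :=
  potential_bound_general n k hk hkn h hh ξ hξ hpos hle hode hfi
end
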